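/- Let Y, U, J be random variables on a finite probability space with Y−U−J a Markov chain, and suppose there is a constant M ≥ 1 such that P(J=j | U=u) ∈ {0, 1/M} for all (j,u) with P(U=u)>0, and P(J=j) ≥ (1−ε)/M for every j in the support of J, with ε ∈ [0,1). Then for every j in the support of J and every y, P(Y=y | J=j) ≤ (1−ε)⁻¹ max_{y'} P(Y=y'). -/

import Mathlib

open Finset Real
open scoped Classical

noncomputable section

/-- Probability of an event under a finite probability mass function. -/
def pr {Ω : Type} [Fintype Ω] (P : Ω → ℝ) (A : Ω → Prop) : ℝ :=
  ∑ ω, if A ω then P ω else 0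

/-- `P` is a probability mass function on the finite type `Ω`. -/
def IsPMF {Ω : Type} [Fintype Ω] (P : Ω → ℝ) : Prop :=
  (∀ ω, 0 ≤ P ω) ∧ ∑ ω, P ω = 1

/-- `-t log₂ t` (with the convention `0 log 0 = 0`). -/
def nlog (t : ℝ) : ℝ := - (t * Real.logb 2 t)

/-- Shannon entropy (base 2) of a random variable `X` on `(Ω, P)`. -/
def ent {Ω α : Type} [Fintype Ω] [Fintype α] (P : Ω → ℝ) (X : Ω → α) : ℝ :=
  ∑ x, nlog (pr P (fun ω => X ω = x))

/-- Conditional Shannon entropy `H(X|Y) = H(X,Y) - H(Y)`. -/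
def condEnt {Ω α β : Type} [Fintype Ω] [Fintype α] [Fintype β]
    (P : Ω → ℝ) (X : Ω → α) (Y : Ω → β) : ℝ :=
  ent P (fun ω => (X ω, Y ω)) - ent P Y

/-- Mutual information `I(X;Y) = H(X) - H(X|Y)`. -/
def mi {Ω α β : Type} [Fintype Ω] [Fintype α] [Fintype β]
    (P : Ω → ℝ) (X : Ω → α) (Y : Ω → β) : ℝ :=
  ent P X - condEnt P X Y

/-- Conditional mutual information `I(X;Y|Z) = H(X|Z) - H(X|Y,Z)`. -/
def condMI {Ω α β γ : Type} [Fintype Ω] [Fintype α] [Fintype β] [Fintype γ]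
    (P : Ω → ℝ) (X : Ω → α) (Y : Ω → β) (Z : Ω → γ) : ℝ :=
  condEnt P X Z - condEnt P X (fun ω => (Y ω, Z ω))

/-- Binary entropy function. -/
def binEnt (a : ℝ) : ℝ := nlog a + nlog (1 - a)

/-! Splitting over the values of `U` and using the Markov property,
`P(Y = y, J = j) = ∑ᵤ P(Y = y, U = u) P(J = j | U = u) ≤ P(Y = y) / M`,
since every bin probability `P(J = j | U = u)` is at most `1/M`.
Dividing by `P(J = j) ≥ (1 - ε) / M` gives the bound. -/

section

variable {Ω : Type} [Fintype Ω] {P : Ω → ℝ}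

lemma pr_nonneg (hP : ∀ ω, 0 ≤ P ω) (A : Ω → Prop) : 0 ≤ pr P A :=
  Finset.sum_nonneg fun ω _ => by split_ifs <;> simp [hP ω]

lemma pr_mono (hP : ∀ ω, 0 ≤ P ω) {A B : Ω → Prop} (hAB : ∀ ω, A ω → B ω) :
    pr P A ≤ pr P B :=
  Finset.sum_le_sum fun ω _ => by
    split_ifs with hA hB hB
    exacts [le_rfl, absurd (hAB ω hA) hB, hP ω, le_rfl]

lemma pr_congr {A B : Ω → Prop} (h : ∀ ω, A ω ↔ B ω) : pr P A = pr P B := by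
  rw [funext fun ω => propext (h ω)]

lemma pr_eq_sum_pr_and {β : Type} [Fintype β] (A : Ω → Prop) (U : Ω → β) :
    pr P A = ∑ u, pr P (fun ω => A ω ∧ U ω = u) := by
  simp only [pr]
  rw [Finset.sum_comm]
  refine Finset.sum_congr rfl fun ω _ => ?_
  by_cases hA : A ω <;> simp [hA]

/-- `hMarkov` is the Markov property `A - B - C`, i.e. `P(A | B, C) = P(A | B)`, with the
denominators cleared. -/
lemma pr_and_and_le_of_markov (hP : ∀ ω, 0 ≤ P ω) {A B C : Ω → Prop} {c : ℝ} (hc : 0 ≤ c)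
    (hMarkov : pr P (fun ω => A ω ∧ B ω ∧ C ω) * pr P B
      = pr P (fun ω => A ω ∧ B ω) * pr P (fun ω => B ω ∧ C ω))
    (hBC : pr P (fun ω => B ω ∧ C ω) ≤ c * pr P B) :
    pr P (fun ω => A ω ∧ B ω ∧ C ω) ≤ c * pr P (fun ω => A ω ∧ B ω) := by
  rcases (pr_nonneg hP B).eq_or_lt with hB | hB
  · have hABC : pr P (fun ω => A ω ∧ B ω ∧ C ω) ≤ pr P B := pr_mono hP fun ω h => h.2.1
    have hAB := pr_nonneg hP (fun ω => A ω ∧ B ω)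
    nlinarith
  · refine le_of_mul_le_mul_right ?_ hB
    calc pr P (fun ω => A ω ∧ B ω ∧ C ω) * pr P B
        = pr P (fun ω => A ω ∧ B ω) * pr P (fun ω => B ω ∧ C ω) := hMarkov
      _ ≤ pr P (fun ω => A ω ∧ B ω) * (c * pr P B) :=
          mul_le_mul_of_nonneg_left hBC (pr_nonneg hP _)
      _ = c * pr P (fun ω => A ω ∧ B ω) * pr P B := by ring

lemma pr_and_le_of_markov {α β γ : Type} [Fintype β] (hP : ∀ ω, 0 ≤ P ω)
    (Y : Ω → α) (U : Ω → β) (J : Ω → γ) (y : α) (j : γ) {c : ℝ} (hc : 0 ≤ c)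
    (hMarkov : ∀ u : β,
      pr P (fun ω => Y ω = y ∧ U ω = u ∧ J ω = j) * pr P (fun ω => U ω = u)
        = pr P (fun ω => Y ω = y ∧ U ω = u) * pr P (fun ω => U ω = u ∧ J ω = j))
    (hJU : ∀ u : β, pr P (fun ω => U ω = u ∧ J ω = j) ≤ c * pr P (fun ω => U ω = u)) :
    pr P (fun ω => Y ω = y ∧ J ω = j) ≤ c * pr P (fun ω => Y ω = y) := by
  rw [pr_eq_sum_pr_and _ U, pr_eq_sum_pr_and (fun ω => Y ω = y) U, Finset.mul_sum]
  refine Finset.sum_le_sum fun u _ => ?_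
  rw [pr_congr fun ω => show (Y ω = y ∧ J ω = j) ∧ U ω = u ↔ Y ω = y ∧ U ω = u ∧ J ω = j by
    tauto]
  exact pr_and_and_le_of_markov hP hc (hMarkov u) (hJU u)

lemma pr_and_le_inv_mul_of_binning {β γ : Type} (hP : ∀ ω, 0 ≤ P ω) (U : Ω → β) (J : Ω → γ)
    (j : γ) (u : β) {M : ℝ} (hM : 0 < M)
    (hbin : 0 < pr P (fun ω => U ω = u) →
      pr P (fun ω => U ω = u ∧ J ω = j) / pr P (fun ω => U ω = u) = 0
      ∨ pr P (fun ω => U ω = u ∧ J ω = j) / pr P (fun ω => U ω = u) = 1 / M) :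
    pr P (fun ω => U ω = u ∧ J ω = j) ≤ M⁻¹ * pr P (fun ω => U ω = u) := by
  rcases (pr_nonneg hP fun ω => U ω = u).eq_or_lt with hU | hU
  · rw [← hU, mul_zero]
    exact hU ▸ pr_mono hP fun ω h => h.1
  · rw [← div_le_iff₀ hU]
    rcases hbin hU with h | h <;> rw [h]
    · positivity
    · rw [one_div]

end

theorem stmt18_general {Ω α β γ : Type} [Fintype Ω] [Fintype α] [Fintype β] [Fintype γ]
    [Nonempty α]
    (P : Ω → ℝ) (hP : IsPMF P)
    (Y : Ω → α) (U : Ω → β) (J : Ω → γ)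
    (M ε : ℝ) (hM : 1 ≤ M) (hε1 : ε < 1)
    (hMarkov : ∀ (y : α) (u : β) (j : γ),
      pr P (fun ω => Y ω = y ∧ U ω = u ∧ J ω = j) * pr P (fun ω => U ω = u)
        = pr P (fun ω => Y ω = y ∧ U ω = u) * pr P (fun ω => U ω = u ∧ J ω = j))
    (hbin : ∀ (j : γ) (u : β), 0 < pr P (fun ω => U ω = u) →
      pr P (fun ω => U ω = u ∧ J ω = j) / pr P (fun ω => U ω = u) = 0
      ∨ pr P (fun ω => U ω = u ∧ J ω = j) / pr P (fun ω => U ω = u) = 1 / M)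
    (hlow : ∀ j : γ, 0 < pr P (fun ω => J ω = j) →
      pr P (fun ω => J ω = j) ≥ (1 - ε) / M) :
    ∀ j : γ, 0 < pr P (fun ω => J ω = j) → ∀ y : α,
      pr P (fun ω => Y ω = y ∧ J ω = j) / pr P (fun ω => J ω = j)
        ≤ (1 - ε)⁻¹ * (Finset.univ.sup' Finset.univ_nonempty
            fun y' : α => pr P (fun ω => Y ω = y')) := by
  intro j hj y
  set S := Finset.univ.sup' Finset.univ_nonempty fun y' : α => pr P (fun ω => Y ω = y')
  have hMpos : 0 < M := by linarith
  have hε : 0 < 1 - ε := by linarith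
  have hyS : pr P (fun ω => Y ω = y) ≤ S :=
    Finset.le_sup' (fun y' : α => pr P (fun ω => Y ω = y')) (Finset.mem_univ y)
  have hYJ : pr P (fun ω => Y ω = y ∧ J ω = j) ≤ M⁻¹ * pr P (fun ω => Y ω = y) :=
    pr_and_le_of_markov hP.1 Y U J y j (inv_nonneg.2 hMpos.le) (hMarkov y · j)
      fun u => pr_and_le_inv_mul_of_binning hP.1 U J j u hMpos (hbin j u)
  rw [div_le_iff₀ hj]
  calc pr P (fun ω => Y ω = y ∧ J ω = j)
      ≤ M⁻¹ * S := hYJ.trans (by gcongr)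
    _ = (1 - ε)⁻¹ * S * ((1 - ε) / M) := by field_simp
    _ ≤ (1 - ε)⁻¹ * S * pr P (fun ω => J ω = j) := by
        have hS : 0 ≤ S := (pr_nonneg hP.1 _).trans hyS
        gcongr
        exact hlow j hj

/-- Single-shot bin-index independence: if `Y - U - J` is a Markov chain, the bin
assignment satisfies `P(J=j|U=u) ∈ {0, 1/M}`, and `P(J=j) ≥ (1-ε)/M` on the
support of `J`, then `P(Y=y|J=j) ≤ (1-ε)⁻¹ max_{y'} P(Y=y')`. -/
theorem stmt18 {Ω α β γ : Type} [Fintype Ω] [Fintype α] [Fintype β] [Fintype γ]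
    [Nonempty α]
    (P : Ω → ℝ) (hP : IsPMF P)
    (Y : Ω → α) (U : Ω → β) (J : Ω → γ)
    (M ε : ℝ) (hM : 1 ≤ M) (hε0 : 0 ≤ ε) (hε1 : ε < 1)
    (hMarkov : ∀ (y : α) (u : β) (j : γ),
      pr P (fun ω => Y ω = y ∧ U ω = u ∧ J ω = j) * pr P (fun ω => U ω = u)
        = pr P (fun ω => Y ω = y ∧ U ω = u) * pr P (fun ω => U ω = u ∧ J ω = j))
    (hbin : ∀ (j : γ) (u : β), 0 < pr P (fun ω => U ω = u) →
      pr P (fun ω => U ω = u ∧ J ω = j) / pr P (fun ω => U ω = u) = 0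
      ∨ pr P (fun ω => U ω = u ∧ J ω = j) / pr P (fun ω => U ω = u) = 1 / M)
    (hlow : ∀ j : γ, 0 < pr P (fun ω => J ω = j) →
      pr P (fun ω => J ω = j) ≥ (1 - ε) / M) :
    ∀ j : γ, 0 < pr P (fun ω => J ω = j) → ∀ y : α,
      pr P (fun ω => Y ω = y ∧ J ω = j) / pr P (fun ω => J ω = j)
        ≤ (1 - ε)⁻¹ * (Finset.univ.sup' Finset.univ_nonempty
            fun y' : α => pr P (fun ω => Y ω = y')) :=
  stmt18_general P hP Y U J M ε hM hε1 hMarkov hbin hlow
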